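/- If λ ∈ P satisfies wλ ≠ λ for some w ∈ W (equivalently, ⟨h_i,λ⟩ ≠ 0 for some i ∈ I), then the orbit Wλ = {wλ : w ∈ W} is an infinite set. -/

import Mathlib

open scoped BigOperators

namespace AffineKM

/-- An indecomposable generalized Cartan matrix of affine type, together with a
choice of positive integers `(a_i)` and `(a_i^∨)` annihilating it on the right
and on the left. -/
structure AffineData (I : Type) [Fintype I] [DecidableEq I] where
  a : I → I → ℤ
  apos : I → ℤ
  avee : I → ℤ
  diag : ∀ i, a i i = 2
  offdiag_nonpos : ∀ i j, i ≠ j → a i j ≤ 0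
  zero_iff : ∀ i j, a i j = 0 ↔ a j i = 0
  connected : ∀ s : Set I, s.Nonempty → sᶜ.Nonempty → ∃ i ∈ s, ∃ j ∈ sᶜ, a i j ≠ 0
  apos_pos : ∀ i, 0 < apos i
  avee_pos : ∀ i, 0 < avee i
  row_zero : ∀ i, (∑ j, a i j * apos j) = 0
  col_zero : ∀ j, (∑ i, avee i * a i j) = 0

variable {I : Type} [Fintype I] [DecidableEq I]

/-- The weight lattice `P`, free on the `Λ_i` and the `α_i`: the first component
records the coordinates with respect to the basis `{Λ_i}`, the second component the
coordinates with respect to the basis `{α_i}`. -/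
abbrev P (I : Type) := (I → ℤ) × (I → ℤ)

/-- The fundamental weight `Λ_i`. -/
def Lambda (i : I) : P I := (Pi.single i 1, 0)

/-- The simple root `α_i`. -/
def alphaRt (i : I) : P I := (0, Pi.single i 1)

/-- A weight lies in `Q = ⊕ ℤα_i` iff its `Λ`-coordinates vanish. -/
def inQ (lam : P I) : Prop := lam.1 = 0

namespace AffineData

variable (D : AffineData I)

/-- The pairing `⟨h_i, λ⟩` with the simple coroot `h_i`. -/
def coroot (i : I) (lam : P I) : ℤ := lam.1 i + ∑ j, D.a i j * lam.2 j

lemma coroot_add (i : I) (x y : P I) :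
    D.coroot i (x + y) = D.coroot i x + D.coroot i y := by
  simp only [coroot, Prod.fst_add, Prod.snd_add, Pi.add_apply, mul_add,
    Finset.sum_add_distrib]
  ring

lemma coroot_zsmul (i : I) (z : ℤ) (x : P I) :
    D.coroot i (z • x) = z * D.coroot i x := by
  simp only [coroot, Prod.smul_fst, Prod.smul_snd, Pi.smul_apply, smul_eq_mul,
    mul_add, Finset.mul_sum]
  congr 1
  apply Finset.sum_congr rfl
  intro j _
  ring

lemma coroot_alpha_self (i : I) : D.coroot i (alphaRt i) = 2 := by
  simp only [coroot, alphaRt, Pi.zero_apply, zero_add]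
  rw [Finset.sum_eq_single i]
  · simp [D.diag]
  · intro j _ hj
    simp [Pi.single_apply, Ne.symm hj]
  · intro h; exact absurd (Finset.mem_univ i) h

lemma refl_aux (i : I) (lam : P I) :
    (lam - D.coroot i lam • alphaRt i)
      - D.coroot i (lam - D.coroot i lam • alphaRt i) • alphaRt i = lam := by
  have h1 : D.coroot i (lam - D.coroot i lam • alphaRt i)
      = - D.coroot i lam := by
    have h0 := D.coroot_add i (lam - D.coroot i lam • alphaRt i)
      (D.coroot i lam • alphaRt i)
    simp only [sub_add_cancel] at h0
    have h2 : D.coroot i (D.coroot i lam • alphaRt i) = 2 * D.coroot i lam := by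
      rw [D.coroot_zsmul, D.coroot_alpha_self]; ring
    omega
  rw [h1, neg_zsmul]
  abel

/-- The simple reflection `s_i : λ ↦ λ - ⟨h_i,λ⟩ α_i`, as an automorphism of `P`. -/
def refl (i : I) : AddAut (P I) where
  toFun lam := lam - D.coroot i lam • alphaRt i
  invFun lam := lam - D.coroot i lam • alphaRt i
  left_inv lam := D.refl_aux i lam
  right_inv lam := D.refl_aux i lam
  map_add' x y := by
    rw [D.coroot_add, add_zsmul]
    abel

/-- The composition group structure on `AddAut A` (Mathlib now makes `AddAut A` an
additive group instead; this restores the older multiplicative instance). -/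
instance addAutCompGroup (A : Type*) [Add A] : Group (AddAut A) where
  mul g h := AddEquiv.trans h g
  one := AddEquiv.refl A
  inv := AddEquiv.symm
  mul_assoc _ _ _ := rfl
  one_mul _ := rfl
  mul_one _ := rfl
  inv_mul_cancel g := AddEquiv.ext g.symm_apply_apply

/-- The affine Weyl group, as a subgroup of the automorphism group of `P`. -/
def weyl : Subgroup (AddAut (P I)) := Subgroup.closure (Set.range D.refl)

/-- The simple reflection `s_i` as an element of the Weyl group. -/
def sgen (i : I) : D.weyl := ⟨D.refl i, Subgroup.subset_closure ⟨i, rfl⟩⟩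

/-- The length of an element of the Weyl group: the minimal length of an
expression as a product of simple reflections. -/
noncomputable def len (w : D.weyl) : ℕ :=
  sInf {n | ∃ l : List I, l.length = n ∧ (w : AddAut (P I)) = (l.map D.refl).prod}

/-- The null root `δ = Σ a_i α_i`. -/
def delta : P I := (0, D.apos)

/-- The pairing `⟨c, λ⟩` with the canonical central element `c = Σ a_i^∨ h_i`. -/
def cpair (lam : P I) : ℤ := ∑ i, D.avee i * D.coroot i lam

/-- The dual Coxeter number `κ* = ⟨c, ρ⟩ = Σ a_i^∨`. -/
def kstar : ℤ := ∑ i, D.avee i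

/-- λ ∈ P is regular if `⟨c,λ⟩ ≠ 0` and `⟨h_i, wλ⟩ ≠ 0` for all `w ∈ W`, `i ∈ I`. -/
def IsRegularWt (lam : P I) : Prop :=
  D.cpair lam ≠ 0 ∧ ∀ w ∈ D.weyl, ∀ i : I, D.coroot i (w lam) ≠ 0

/-- The `W`-orbit of a weight. -/
def orb (lam : P I) : Set (P I) := {mu | ∃ w ∈ D.weyl, w lam = mu}

end AffineData

/-- The group algebra `ℤ[P]`. -/
abbrev ZP (I : Type) [Fintype I] [DecidableEq I] := AddMonoidAlgebra ℤ (P I)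

/-- The basis element `e^λ` of `ℤ[P]`. -/
noncomputable def expw (lam : P I) : ZP I := AddMonoidAlgebra.single lam 1

/-- The action of an automorphism `w` of `P` on the group algebra `ℤ[P]`,
`e^λ ↦ e^{wλ}`, as a ring homomorphism. -/
noncomputable def wact (w : AddAut (P I)) : ZP I →+* ZP I :=
  AddMonoidAlgebra.mapDomainRingHom ℤ w.toAddMonoidHom

lemma wact_single (w : AddAut (P I)) (lam : P I) (c : ℤ) :
    wact w (AddMonoidAlgebra.single lam c) = AddMonoidAlgebra.single (w lam) c := by
  simp [wact, AddMonoidAlgebra.mapDomainRingHom, Finsupp.mapDomain_single]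


namespace AffineData

variable (D : AffineData I)

lemma coroot_delta (i : I) : D.coroot i D.delta = 0 := by
  simp only [coroot, delta, Pi.zero_apply, zero_add]
  exact D.row_zero i

lemma refl_apply (i : I) (lam : P I) :
    D.refl i lam = lam - D.coroot i lam • alphaRt i := rfl

lemma refl_delta (i : I) : D.refl i D.delta = D.delta := by
  rw [refl_apply, D.coroot_delta, zero_zsmul, sub_zero]

lemma weyl_fix_delta {w : AddAut (P I)} (hw : w ∈ D.weyl) : w D.delta = D.delta := by
  induction hw using Subgroup.closure_induction with
  | mem x hx => obtain ⟨i, rfl⟩ := hx; exact D.refl_delta i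
  | one => rfl
  | mul x y hx hy ihx ihy =>
      show x (y D.delta) = D.delta
      rw [ihy, ihx]
  | inv x hx ih =>
      have : x⁻¹ (x D.delta) = x⁻¹ D.delta := by rw [ih]
      exact (this.symm.trans (AddEquiv.symm_apply_apply x D.delta))

lemma weyl_fix_zsmul_delta {w : AddAut (P I)} (hw : w ∈ D.weyl) (n : ℤ) :
    w (n • D.delta) = n • D.delta := by
  rw [map_zsmul, D.weyl_fix_delta hw]

/-- The multiplicative set generated by the elements `e^{nδ} - 1`, `n ≥ 1`; `R ⊗_{ℤ[q,q⁻¹]} ℤ[P]`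
is realized as the localization of `ℤ[P]` at this set. -/
noncomputable def denomSet : Submonoid (ZP I) :=
  Submonoid.closure {x | ∃ n : ℤ, 0 < n ∧ x = expw (n • D.delta) - 1}

/-- `R ⊗_{ℤ[q,q⁻¹]} ℤ[P]`, realized as the localization of `ℤ[P]` at the
multiplicative set generated by the `e^{nδ} - 1`, `n ≥ 1` (note that `q = e^δ` is
already invertible in this ring). -/
noncomputable abbrev locZP := Localization D.denomSet

lemma wact_denom {w : AddAut (P I)} (hw : w ∈ D.weyl) :
    D.denomSet ≤ Submonoid.comap (wact w) D.denomSet := by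
  rw [denomSet, Submonoid.closure_le]
  intro x hx
  obtain ⟨n, hn, rfl⟩ := hx
  simp only [Submonoid.coe_comap, Set.mem_preimage, SetLike.mem_coe]
  have : wact w (expw (n • D.delta) - 1) = expw (n • D.delta) - 1 := by
    rw [map_sub, map_one, expw, wact_single, D.weyl_fix_zsmul_delta hw]
  rw [this]
  exact Submonoid.subset_closure ⟨n, hn, rfl⟩

/-- The action of `w ∈ W` on `R ⊗_{ℤ[q,q⁻¹]} ℤ[P]`. -/
noncomputable def wactM (w : D.weyl) : D.locZP →+* D.locZP :=
  IsLocalization.map (Localization D.denomSet) (wact (w : AddAut (P I)))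
    (D.wact_denom w.2)

end AffineData

/-- The projection `P = L ⊕ Q → Q`, as an additive homomorphism. -/
def projQ : P I →+ P I where
  toFun lam := (0, lam.2)
  map_zero' := rfl
  map_add' x y := by simp [Prod.ext_iff]

/-- The ring homomorphism `j_e : ℤ[P] → ℤ[Q] ⊆ ℤ[P]`, `e^{λ+α} ↦ e^α` for
`λ ∈ L`, `α ∈ Q`. -/
noncomputable def jeRing : ZP I →+* ZP I :=
  AddMonoidAlgebra.mapDomainRingHom ℤ (projQ (I := I))

/-- The ℤ-linear map `j_w : ℤ[P] → ℤ[Q] ⊆ ℤ[P]`, `e^{λ+α} ↦ e^{w(λ+α)-λ}` for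
`λ ∈ L`, `α ∈ Q`. -/
noncomputable def jmap (w : AddAut (P I)) (u : ZP I) : ZP I :=
  AddMonoidAlgebra.mapDomain (fun mu => w mu - (mu.1, 0)) u

namespace AffineData

variable (D : AffineData I)

lemma je_denom : D.denomSet ≤ Submonoid.comap (jeRing (I := I)) D.denomSet := by
  rw [denomSet, Submonoid.closure_le]
  intro x hx
  obtain ⟨n, hn, rfl⟩ := hx
  simp only [Submonoid.coe_comap, Set.mem_preimage, SetLike.mem_coe]
  have h1 : jeRing (expw (n • D.delta) - 1) = expw (n • D.delta) - 1 := by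
    rw [map_sub, map_one, expw, jeRing]
    have : AddMonoidAlgebra.mapDomainRingHom ℤ (projQ (I := I))
        (AddMonoidAlgebra.single (n • D.delta) 1)
        = AddMonoidAlgebra.single (projQ (n • D.delta)) (1 : ℤ) := by
      simp [AddMonoidAlgebra.mapDomainRingHom, Finsupp.mapDomain_single]
    rw [this]
    have h2 : projQ (n • D.delta) = n • D.delta := by
      show ((0 : I → ℤ), (n • D.delta).2) = n • D.delta
      simp [delta, Prod.ext_iff]
    rw [h2]
  rw [h1]
  exact Submonoid.subset_closure ⟨n, hn, rfl⟩

/-- The `R`-linear extension of `j_e` to `R ⊗_{ℤ[q,q⁻¹]} ℤ[P]`, with values in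
`R ⊗_{ℤ[q,q⁻¹]} ℤ[Q] ⊆ R ⊗_{ℤ[q,q⁻¹]} ℤ[P]`. -/
noncomputable def jeLoc : D.locZP →+* D.locZP :=
  IsLocalization.map (Localization D.denomSet) (jeRing (I := I)) D.je_denom

end AffineData


namespace AffineData

variable (D : AffineData I)

lemma coroot_sub (i : I) (x y : P I) :
    D.coroot i (x - y) = D.coroot i x - D.coroot i y := by
  have := D.coroot_add i (x - y) y
  rw [sub_add_cancel] at this
  omega

lemma coroot_alpha (i j : I) : D.coroot i (alphaRt j) = D.a i j := by
  simp only [coroot, alphaRt, Pi.zero_apply, zero_add]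
  rw [Finset.sum_eq_single j]
  · simp
  · intro k _ hk
    simp [Pi.single_apply, hk]
  · intro h; exact absurd (Finset.mem_univ j) h

lemma coroot_refl (i j : I) (mu : P I) :
    D.coroot j (D.refl i mu) = D.coroot j mu - D.coroot i mu * D.a j i := by
  rw [refl_apply, D.coroot_sub, D.coroot_zsmul, D.coroot_alpha]

lemma cpair_refl (i : I) (mu : P I) : D.cpair (D.refl i mu) = D.cpair mu := by
  simp only [cpair, D.coroot_refl, mul_sub]
  rw [Finset.sum_sub_distrib, sub_eq_self]
  have : ∀ j, D.avee j * (D.coroot i mu * D.a j i)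
      = D.coroot i mu * (D.avee j * D.a j i) := fun j => by ring
  simp only [this]
  rw [← Finset.mul_sum, D.col_zero i, mul_zero]

lemma cpair_weyl {w : AddAut (P I)} (hw : w ∈ D.weyl) :
    ∀ mu : P I, D.cpair (w mu) = D.cpair mu := by
  induction hw using Subgroup.closure_induction with
  | mem x hx => obtain ⟨i, rfl⟩ := hx; exact D.cpair_refl i
  | one => intro mu; rfl
  | mul x y hx hy ihx ihy =>
      intro mu
      show D.cpair (x (y mu)) = _
      rw [ihx, ihy]
  | inv x hx ih =>
      intro mu
      have := ih (x⁻¹ mu)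
      rw [show x (x⁻¹ mu) = mu from AddEquiv.apply_symm_apply x mu] at this
      exact this.symm

lemma weyl_fix {mu : P I} (h0 : ∀ i, D.coroot i mu = 0)
    {w : AddAut (P I)} (hw : w ∈ D.weyl) : w mu = mu := by
  induction hw using Subgroup.closure_induction with
  | mem x hx =>
      obtain ⟨i, rfl⟩ := hx
      rw [refl_apply, h0 i, zero_zsmul, sub_zero]
  | one => rfl
  | mul x y hx hy ihx ihy =>
      show x (y mu) = mu
      rw [ihy, ihx]
  | inv x hx ih =>
      have : x⁻¹ (x mu) = x⁻¹ mu := by rw [ih]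
      exact this.symm.trans (AddEquiv.symm_apply_apply x mu)

/-- The "height" functional `Σ_j a_j^∨ (α_j-coordinate)`. -/
def ht (mu : P I) : ℤ := ∑ j, D.avee j * mu.2 j

lemma ht_refl (i : I) (mu : P I) :
    D.ht (D.refl i mu) = D.ht mu - D.coroot i mu * D.avee i := by
  have h2 : (D.refl i mu).2 = mu.2 - D.coroot i mu • Pi.single i 1 := rfl
  simp only [ht, h2, Pi.sub_apply, Pi.smul_apply, smul_eq_mul, mul_sub]
  rw [Finset.sum_sub_distrib]
  congr 1
  rw [Finset.sum_eq_single i]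
  · simp [mul_comm]
  · intro k _ hk
    simp [Pi.single_apply, hk]
  · intro h; exact absurd (Finset.mem_univ i) h

end AffineData

/-- Remark 10.3: if `λ ∈ P` satisfies `wλ ≠ λ` for some `w ∈ W`, then the orbit `Wλ` is
infinite. -/
theorem orbit_infinite (D : AffineData I) (lam : P I)
    (h : ∃ w ∈ D.weyl, w lam ≠ lam) :
    (D.orb lam).Infinite := by
  by_contra hfin
  rw [Set.not_infinite] at hfin
  obtain ⟨w, hw, hwl⟩ := h
  have hlam : lam ∈ D.orb lam := ⟨1, one_mem _, rfl⟩
  have hclosed : ∀ i : I, ∀ μ ∈ D.orb lam, D.refl i μ ∈ D.orb lam := by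
    rintro i μ ⟨u, hu, rfl⟩
    exact ⟨D.refl i * u, mul_mem (Subgroup.subset_closure ⟨i, rfl⟩) hu, rfl⟩
  set s := hfin.toFinset with hs
  have hsne : s.Nonempty := ⟨lam, hfin.mem_toFinset.2 hlam⟩
  obtain ⟨μ, hμs, hmax⟩ := s.exists_max_image D.ht hsne
  obtain ⟨ν, hνs, hmin⟩ := s.exists_min_image D.ht hsne
  have hμ : μ ∈ D.orb lam := hfin.mem_toFinset.1 hμs
  have hν : ν ∈ D.orb lam := hfin.mem_toFinset.1 hνs
  have hterm : ∀ i : I, 0 ≤ D.avee i * D.coroot i μ := by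
    intro i
    have h1 := hmax (D.refl i μ) (hfin.mem_toFinset.2 (hclosed i μ hμ))
    rw [D.ht_refl] at h1
    nlinarith [D.avee_pos i]
  have hterm' : ∀ i : I, D.avee i * D.coroot i ν ≤ 0 := by
    intro i
    have h1 := hmin (D.refl i ν) (hfin.mem_toFinset.2 (hclosed i ν hν))
    rw [D.ht_refl] at h1
    nlinarith [D.avee_pos i]
  obtain ⟨wμ, hwμ, hwμl⟩ := hμ
  obtain ⟨wν, hwν, hwνl⟩ := hν
  have hcμ : D.cpair μ = D.cpair lam := by rw [← hwμl, D.cpair_weyl hwμ]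
  have hcν : D.cpair ν = D.cpair lam := by rw [← hwνl, D.cpair_weyl hwν]
  have hμ0 : 0 ≤ D.cpair μ := Finset.sum_nonneg fun i _ => hterm i
  have hν0 : D.cpair ν ≤ 0 := Finset.sum_nonpos fun i _ => hterm' i
  have hsum0 : D.cpair μ = 0 := by omega
  have hco : ∀ i : I, D.coroot i μ = 0 := by
    intro i
    have := (Finset.sum_eq_zero_iff_of_nonneg fun i _ => hterm i).1 hsum0 i
      (Finset.mem_univ i)
    have hp := D.avee_pos i
    exact by nlinarith [hterm i]
  have hlamμ : lam = μ := by
    have h1 : wμ⁻¹ μ = μ := D.weyl_fix hco (inv_mem hwμ)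
    have h2 : wμ⁻¹ (wμ lam) = lam := AddEquiv.symm_apply_apply wμ lam
    rw [hwμl, h1] at h2
    exact h2.symm
  exact hwl (by rw [hlamμ]; exact D.weyl_fix hco hw)

end AffineKM
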